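/- Let E_{m,1} be the 1 × m² matrix with E_{m,1}(1, (i−1)m + j) = δ(i,j), let E_{m,n} = E_{m,1} ⊗ 1_n (an n × m²n matrix), and let H_{m,n} be the transpose of E_{m,n}. Then for all m, n the triangular identity E_{m,mn} · (1_m ⊗ H_{m,n}) = 1_{mn} holds, where · is matrix multiplication and ⊗ the Kronecker product. -/
import Mathlib


/-- The "quotient" part of the 0-indexed decomposition `r = (r / b) * b + r % b`
of an index `r < a * b`. -/
def finDiv {a b : ℕ} (r : Fin (a * b)) : Fin a :=
  ⟨(r : ℕ) / b, Nat.div_lt_of_lt_mul (Nat.mul_comm a b ▸ r.isLt)⟩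

/-- The "remainder" part of the 0-indexed decomposition `r = (r / b) * b + r % b`
of an index `r < a * b`. -/
def finMod {a b : ℕ} (r : Fin (a * b)) : Fin b :=
  ⟨(r : ℕ) % b, Nat.mod_lt _ (Nat.pos_of_ne_zero (by
    rintro rfl
    exact absurd r.isLt (by simp)))⟩

variable {R : Type*}

/-- The Kronecker product of an `n × m` matrix and an `l × k` matrix, as an
`(n·l) × (m·k)` matrix: `(M ⊗ N)((i−1)l + p, (j−1)k + q) = M(i,j) · N(p,q)`. -/
def kron [Mul R] {n m l k : ℕ} (M : Matrix (Fin n) (Fin m) R)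
    (N : Matrix (Fin l) (Fin k) R) : Matrix (Fin (n * l)) (Fin (m * k)) R :=
  Matrix.of fun r c => M (finDiv r) (finDiv c) * N (finMod r) (finMod c)

/-- The commutation matrix `S_{m,n}`: the `nm × mn` 0-1 matrix with
`S_{m,n}((i−1)m + j, k) = δ(k, (j−1)n + i)` for `1 ≤ i ≤ n`, `1 ≤ j ≤ m`. -/
def commMatrix [Zero R] [One R] (m n : ℕ) : Matrix (Fin (n * m)) (Fin (m * n)) R :=
  Matrix.of fun r c => if (c : ℕ) = (finMod r : ℕ) * n + (finDiv r : ℕ) then 1 else 0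

/-- The counit matrix `E_{m,n} = E_{m,1} ⊗ 1_n`, where `E_{m,1}` is the `1 × m²` matrix with
`E_{m,1}(1, (i−1)m + j) = δ(i,j)`.  Concretely `E_{m,n}` is the `n × m²n` 0-1 matrix whose
entry at row `r` and column `((i−1)m + j − 1)n + s` is `δ(i,j)·δ(r,s)`. -/
def EMat [Zero R] [One R] (m n : ℕ) : Matrix (Fin n) (Fin (m * m * n)) R :=
  Matrix.of fun r c =>
    if ((c : ℕ) / n) / m = ((c : ℕ) / n) % m ∧ (c : ℕ) % n = (r : ℕ) then 1 else 0

/-- The unit matrix `H_{m,n}`, the transpose of `E_{m,n}`. -/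
def HMat [Zero R] [One R] (m n : ℕ) : Matrix (Fin (m * m * n)) (Fin n) R :=
  (EMat m n).transpose


lemma split_div {b x y : ℕ} (hb : 0 < b) (hx : x < b) :
    (x + b * y) / b = y ∧ (x + b * y) % b = x := by
  constructor
  · rw [Nat.add_mul_div_left _ _ hb, Nat.div_eq_of_lt hx, Nat.zero_add]
  · rw [Nat.add_mul_mod_self_left, Nat.mod_eq_of_lt hx]

lemma key_fwd (m n k r c : ℕ) (hm : 0 < m) (hn : 0 < n) (hr : r < m*n) (hc : c < m*n)
    (hA : (k/(m*n))/m = (k/(m*n))%m)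
    (hB : k%(m*n) = r)
    (hC : k/(m*m*n) = c/n)
    (hD : ((k%(m*m*n))/n)/m = ((k%(m*m*n))/n)%m)
    (hE : (k%(m*m*n))%n = c%n) :
    r = c ∧ k = (c/n)*((m+1)*(m*n)) + c := by
  set i := (k/(m*n))%m with hidef
  have hi : i < m := Nat.mod_lt _ hm
  have hq : k/(m*n) = m * i + i := by
    have h := Nat.div_add_mod (k/(m*n)) m
    rw [hA] at h
    omega
  have hk1 : k = (m*n)*(m*i+i) + r := by
    have h2 := Nat.div_add_mod k (m*n)
    rw [hq, hB] at h2
    omega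
  have hk2 : k = ((m*n)*i + r) + (m*m*n)*i := by rw [hk1]; ring
  have hx : (m*n)*i + r < m*m*n := by
    calc (m*n)*i + r < (m*n)*i + m*n := by omega
      _ = (m*n)*(i+1) := by ring
      _ ≤ (m*n)*m := Nat.mul_le_mul_left _ hi
      _ = m*m*n := by ring
  have hdm := split_div (y := i) (by positivity : 0 < m*m*n) hx
  rw [← hk2] at hdm
  have hicn : i = c/n := by rw [← hdm.1, hC]
  rw [hdm.2] at hD hE
  have ha : (m*n)*i + r = r + n*(m*i) := by ring
  rw [ha] at hD hE
  have hrn : r/n < m := Nat.div_lt_of_lt_mul (Nat.mul_comm m n ▸ hr)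
  rw [Nat.add_mul_div_left _ _ hn] at hD
  rw [Nat.add_mul_mod_self_left] at hE
  have h3 := split_div (x := r/n) (y := i) hm hrn
  rw [h3.1, h3.2] at hD
  have hrdiv : r / n = c / n := by omega
  have hrc : r = c := by
    rw [← Nat.div_add_mod r n, ← Nat.div_add_mod c n, hrdiv, hE]
  refine ⟨hrc, ?_⟩
  rw [hk1, hicn, hrc]; ring

lemma key_bwd (m n c : ℕ) (hm : 0 < m) (hn : 0 < n) (hc : c < m*n) :
    (c/n)*((m+1)*(m*n)) + c < m*m*(m*n) ∧
    ((((c/n)*((m+1)*(m*n)) + c)/(m*n))/m = (((c/n)*((m+1)*(m*n)) + c)/(m*n))%m) ∧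
    ((c/n)*((m+1)*(m*n)) + c)%(m*n) = c ∧
    ((c/n)*((m+1)*(m*n)) + c)/(m*m*n) = c/n ∧
    (((((c/n)*((m+1)*(m*n)) + c)%(m*m*n))/n)/m = ((((c/n)*((m+1)*(m*n)) + c)%(m*m*n))/n)%m) ∧
    (((c/n)*((m+1)*(m*n)) + c)%(m*m*n))%n = c%n := by
  set i := c/n with hidef
  have hi : i < m := Nat.div_lt_of_lt_mul (Nat.mul_comm m n ▸ hc)
  have hk0 : i*((m+1)*(m*n)) + c = c + (m*n)*(i*(m+1)) := by ring
  have h1 := split_div (y := i*(m+1)) (by positivity : 0 < m*n) hc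
  rw [← hk0] at h1
  have hbound : i*((m+1)*(m*n)) + c < m*m*(m*n) := by
    calc i*((m+1)*(m*n)) + c < i*((m+1)*(m*n)) + m*n := by omega
      _ = (i*(m+1)+1)*(m*n) := by ring
      _ ≤ (m*m)*(m*n) := by
          apply Nat.mul_le_mul_right
          nlinarith
      _ = m*m*(m*n) := by ring
  refine ⟨hbound, ?_, h1.2, ?_, ?_, ?_⟩
  · rw [h1.1]
    have h4 : i*(m+1) = i + m*i := by ring
    rw [h4]
    have h2 := split_div (x := i) (y := i) hm hi
    rw [h2.1, h2.2]
  all_goals {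
    have hk2 : i*((m+1)*(m*n)) + c = ((m*n)*i + c) + (m*m*n)*i := by ring
    have hx : (m*n)*i + c < m*m*n := by
      calc (m*n)*i + c < (m*n)*i + m*n := by omega
        _ = (m*n)*(i+1) := by ring
        _ ≤ (m*n)*m := Nat.mul_le_mul_left _ hi
        _ = m*m*n := by ring
    have hdm := split_div (y := i) (by positivity : 0 < m*m*n) hx
    rw [← hk2] at hdm
    first
    | exact hdm.1
    | (rw [hdm.2]
       have ha : (m*n)*i + c = c + n*(m*i) := by ring
       rw [ha]
       first
       | (rw [Nat.add_mul_div_left _ _ hn]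
          have h3 := split_div (x := c/n) (y := i) hm hi
          rw [h3.1, h3.2])
       | rw [Nat.add_mul_mod_self_left])
  }

/-- The triangular equation `φ_{FA} ∘ F γ_A = 1_{FA}` in `Mat_F`:
`E_{m,mn} · (1_m ⊗ H_{m,n}) = 1_{mn}` (the Kronecker factor being reindexed along the
canonical identification `m·(m²n) = m²·(mn)`). -/
theorem EMat_triangular {F : Type*} [Field F] (m n : ℕ) :
    (EMat m (m * n) : Matrix (Fin (m * n)) (Fin (m * m * (m * n))) F) *
      (Matrix.reindex (finCongr (by ring : m * (m * m * n) = m * m * (m * n)))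
        (Equiv.refl (Fin (m * n))))
        (kron (1 : Matrix (Fin m) (Fin m) F) (HMat m n)) =
      (1 : Matrix (Fin (m * n)) (Fin (m * n)) F) := by
  ext r c
  have hmn : 0 < m * n := lt_of_le_of_lt (Nat.zero_le _) r.isLt
  have hm : 0 < m := Nat.pos_of_ne_zero (by rintro rfl; simp at hmn)
  have hn : 0 < n := Nat.pos_of_ne_zero (by rintro rfl; simp at hmn)
  rw [Matrix.mul_apply, Matrix.one_apply]
  have hterm : ∀ k : Fin (m*m*(m*n)),
      (EMat m (m * n) : Matrix (Fin (m * n)) (Fin (m * m * (m * n))) F) r k *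
      (Matrix.reindex (finCongr (by ring : m * (m * m * n) = m * m * (m * n)))
        (Equiv.refl (Fin (m * n))))
        (kron (1 : Matrix (Fin m) (Fin m) F) (HMat m n)) k c =
      if ((r : ℕ) = (c : ℕ) ∧ (k : ℕ) = ((c:ℕ)/n)*((m+1)*(m*n)) + (c:ℕ)) then 1 else 0 := by
    intro k
    simp only [EMat, kron, HMat, Matrix.reindex_apply, Matrix.submatrix_apply,
      Equiv.refl_symm, Equiv.refl_apply, Matrix.transpose_apply, Matrix.of_apply,
      Matrix.one_apply, finDiv, finMod, finCongr_symm, finCongr_apply, Fin.coe_cast,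
      Fin.mk.injEq]
    rcases key_bwd m n (c:ℕ) hm hn c.isLt with ⟨-, hb1, hb2, hb3, hb4, hb5⟩
    have hprod : ∀ (p q s : Prop) [Decidable p] [Decidable q] [Decidable s],
        (if p then (1:F) else 0) * ((if q then 1 else 0) * (if s then 1 else 0)) =
        if p ∧ q ∧ s then 1 else 0 := by
      intro p q s _ _ _
      by_cases hp : p <;> by_cases hq : q <;> by_cases hs : s <;> simp [hp, hq, hs]
    rw [hprod]
    have hiff : (((k:ℕ)/(m*n)/m = (k:ℕ)/(m*n)%m ∧ (k:ℕ)%(m*n) = (r:ℕ)) ∧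
        (k:ℕ)/(m*m*n) = (c:ℕ)/n ∧
        ((k:ℕ)%(m*m*n)/n/m = (k:ℕ)%(m*m*n)/n%m ∧ (k:ℕ)%(m*m*n)%n = (c:ℕ)%n)) ↔
        ((r:ℕ) = (c:ℕ) ∧ (k:ℕ) = ((c:ℕ)/n)*((m+1)*(m*n)) + (c:ℕ)) := by
      constructor
      · rintro ⟨⟨hA, hB⟩, hC, hD, hE⟩
        exact key_fwd m n k r c hm hn r.isLt c.isLt hA hB hC hD hE
      · rintro ⟨hrc, hkk⟩
        rw [hkk, hrc]
        exact ⟨⟨hb1, hb2⟩, hb3, hb4, hb5⟩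
    simp only [hiff]
  rw [Finset.sum_congr rfl (fun k _ => hterm k)]
  by_cases hrc : (r : ℕ) = (c : ℕ)
  · simp only [hrc, true_and]
    have hb := (key_bwd m n c hm hn c.isLt).1
    have heq : ∀ x : Fin (m*m*(m*n)),
        ((x:ℕ) = ((c:ℕ)/n)*((m+1)*(m*n)) + (c:ℕ)) = (x = ⟨_, hb⟩) := by
      intro x; rw [Fin.ext_iff]
    simp_rw [heq]
    rw [Finset.sum_ite_eq' Finset.univ (⟨_, hb⟩ : Fin (m*m*(m*n))) (fun _ => (1:F))]
    simp [Fin.ext_iff, hrc]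
  · simp [hrc, Fin.ext_iff]
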